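/- arXiv:math/0003151 — 2 statements merged into one kernel-verified Lean document; each statement's English description precedes it below -/
import Mathlib

section
/- If a Banach space X contains a sequence spanning ℓ¹ asymptotically isometrically, then X fails the fixed point property for contractive maps. -/
open NormedSpace Filter Topology

namespace NormedSpace
abbrev Dual (𝕜 : Type*) [NontriviallyNormedField 𝕜] (E : Type*) [SeminormedAddCommGroup E]
    [NormedSpace 𝕜 E] : Type _ := E →L[𝕜] 𝕜
end NormedSpace

/-- A sequence spans `ℓ¹` asymptotically isometrically. -/
def SpansL1Asymptotically {X : Type*} [NormedAddCommGroup X] [NormedSpace ℝ X]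
    (x : ℕ → X) : Prop :=
  ∃ δ : ℕ → ℝ, (∀ n, 0 ≤ δ n ∧ δ n < 1) ∧ Tendsto δ atTop (nhds 0) ∧
    ∀ (N : ℕ) (α : ℕ → ℝ),
      (∑ n ∈ Finset.range N, (1 - δ n) * |α n|) ≤ ‖∑ n ∈ Finset.range N, α n • x n‖ ∧
      ‖∑ n ∈ Finset.range N, α n • x n‖ ≤ ∑ n ∈ Finset.range N, |α n|

/-- A sequence spans `ℓ¹` almost isometrically. -/
def SpansL1AlmostIsometrically {X : Type*} [NormedAddCommGroup X] [NormedSpace ℝ X]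
    (x : ℕ → X) : Prop :=
  ∃ δ : ℕ → ℝ, (∀ n, 0 ≤ δ n ∧ δ n < 1) ∧ Tendsto δ atTop (nhds 0) ∧
    ∀ (m M : ℕ) (α : ℕ → ℝ),
      (1 - δ m) * (∑ n ∈ Finset.Icc m M, |α n|) ≤ ‖∑ n ∈ Finset.Icc m M, α n • x n‖ ∧
      ‖∑ n ∈ Finset.Icc m M, α n • x n‖ ≤ ∑ n ∈ Finset.Icc m M, |α n|

/-- A sequence spans `c₀` asymptotically isometrically. -/
def SpansC0Asymptotically {X : Type*} [NormedAddCommGroup X] [NormedSpace ℝ X]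
    (z : ℕ → X) : Prop :=
  ∃ δ : ℕ → ℝ, (∀ n, 0 ≤ δ n ∧ δ n < 1) ∧ Tendsto δ atTop (nhds 0) ∧
    ∀ (N : ℕ) (hN : N ≠ 0) (α : ℕ → ℝ),
      ((Finset.range N).sup' (Finset.nonempty_range_iff.mpr hN)
          (fun n => (1 - δ n) * |α n|)) ≤ ‖∑ n ∈ Finset.range N, α n • z n‖ ∧
      ‖∑ n ∈ Finset.range N, α n • z n‖ ≤
        (Finset.range N).sup' (Finset.nonempty_range_iff.mpr hN)
          (fun n => (1 + δ n) * |α n|)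

/-- `P` is an L-projection: an idempotent bounded operator with
`‖ξ‖ = ‖Pξ‖ + ‖ξ - Pξ‖` for all `ξ`. -/
def IsLProjection {E : Type*} [NormedAddCommGroup E] [NormedSpace ℝ E]
    (P : E →L[ℝ] E) : Prop :=
  (∀ ξ, P (P ξ) = P ξ) ∧ ∀ ξ, ‖ξ‖ = ‖P ξ‖ + ‖ξ - P ξ‖

/-- `X` is L-embedded: the canonical image of `X` in its bidual is the range of an
L-projection. -/
def IsLEmbedded (X : Type*) [NormedAddCommGroup X] [NormedSpace ℝ X] : Prop :=
  ∃ P : Dual ℝ (Dual ℝ X) →L[ℝ] Dual ℝ (Dual ℝ X),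
    (∀ ξ, P (P ξ) = P ξ) ∧ (∀ ξ, ‖ξ‖ = ‖P ξ‖ + ‖ξ - P ξ‖) ∧
      Set.range P = Set.range (inclusionInDoubleDual ℝ X)

/-- `X` is M-embedded: the annihilator of `X` in `X'''` is the range of an
L-projection on `X'''`. -/
def IsMEmbedded (X : Type*) [NormedAddCommGroup X] [NormedSpace ℝ X] : Prop :=
  ∃ P : Dual ℝ (Dual ℝ (Dual ℝ X)) →L[ℝ] Dual ℝ (Dual ℝ (Dual ℝ X)),
    (∀ φ, P (P φ) = P φ) ∧ (∀ φ, ‖φ‖ = ‖P φ‖ + ‖φ - P φ‖) ∧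
      Set.range P = {φ | ∀ x : X, φ (inclusionInDoubleDual ℝ X x) = 0}

/-- `X` fails the fixed point property: there are a nonempty closed bounded convex set and
a contractive self-map without fixed point. -/
def FailsFPP (X : Type*) [NormedAddCommGroup X] [NormedSpace ℝ X] : Prop :=
  ∃ C : Set X, C.Nonempty ∧ IsClosed C ∧ Bornology.IsBounded C ∧ Convex ℝ C ∧
    ∃ f : X → X, Set.MapsTo f C C ∧
      (∀ x ∈ C, ∀ y ∈ C, x ≠ y → ‖f x - f y‖ < ‖x - y‖) ∧
      ∀ x ∈ C, f x ≠ x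

/-!
Pass to a subsequence along which `δ` is summably small and rescale it by weights `1 + 2⁻ᵏ`:
the resulting vectors `vₖ` satisfy a lower `ℓ¹`-estimate with weights `cₖ ≥ 1` that strictly
dominate `‖vₖ₊₁‖`. Then `t ↦ ∑ tₖ vₖ` embeds `ℓ¹` isomorphically into `X`, and the right shift on
the positive face of the unit sphere of `ℓ¹` becomes a fixed-point-free self-map of the closed
bounded convex image, contractive since `‖∑ tₖ vₖ₊₁‖ ≤ ∑ |tₖ| ‖vₖ₊₁‖ < ∑ cₖ |tₖ| ≤ ‖∑ tₖ vₖ‖`.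
-/

open scoped lp
open Finset

theorem failsFPP_of_antilipschitz {E X : Type*} [NormedAddCommGroup E] [NormedSpace ℝ E]
    [CompleteSpace E] [NormedAddCommGroup X] [NormedSpace ℝ X] (T : E →L[ℝ] X) {K : NNReal}
    (hT : AntilipschitzWith K T) {S : Set E} (hne : S.Nonempty) (hcl : IsClosed S)
    (hb : Bornology.IsBounded S) (hcv : Convex ℝ S) (g : E → E) (hgS : Set.MapsTo g S S)
    (hg : ∀ s ∈ S, ∀ r ∈ S, s ≠ r → ‖T (g s) - T (g r)‖ < ‖T s - T r‖)
    (hfix : ∀ s ∈ S, g s ≠ s) : FailsFPP X := by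
  set f : X → X := fun u => T (g (Function.invFunOn T S u))
  have hf : ∀ s ∈ S, f (T s) = T (g s) := fun s hs => by
    simp only [f, hT.injective.injOn.leftInvOn_invFunOn hs]
  refine ⟨T '' S, hne.image T, (hT.isClosedEmbedding T.uniformContinuous).isClosedMap S hcl,
    T.lipschitz.isBounded_image hb, hcv.linear_image (T : E →ₗ[ℝ] X), f, ?_, ?_, ?_⟩
  · rintro _ ⟨s, hs, rfl⟩
    rw [hf s hs]
    exact Set.mem_image_of_mem T (hgS hs)
  · rintro _ ⟨s, hs, rfl⟩ _ ⟨r, hr, rfl⟩ hne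
    rw [hf s hs, hf r hr]
    exact hg s hs r hr (ne_of_apply_ne T hne)
  · rintro _ ⟨s, hs, rfl⟩ heq
    rw [hf s hs] at heq
    exact hfix s hs (hT.injective heq)

def HasLowerL1Estimate {X : Type*} [NormedAddCommGroup X] [NormedSpace ℝ X] (v : ℕ → X)
    (c : ℕ → ℝ) : Prop :=
  ∀ N (β : ℕ → ℝ), ∑ k ∈ range N, c k * |β k| ≤ ‖∑ k ∈ range N, β k • v k‖

section LowerEstimate

variable {X : Type*} [NormedAddCommGroup X] [NormedSpace ℝ X] {v : ℕ → X} {c : ℕ → ℝ}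

lemma HasLowerL1Estimate.sum_le (h : HasLowerL1Estimate v c) (s : Finset ℕ) (β : ℕ → ℝ) :
    ∑ n ∈ s, c n * |β n| ≤ ‖∑ n ∈ s, β n • v n‖ := by
  obtain ⟨N, hN⟩ := s.exists_nat_subset_range
  set β' : ℕ → ℝ := fun n => if n ∈ s then β n else 0
  have hβ' : ∀ n ∈ s, β' n = β n := fun n hn => if_pos hn
  have hβ'0 : ∀ n ∉ s, β' n = 0 := fun n hn => if_neg hn
  calc ∑ n ∈ s, c n * |β n| = ∑ n ∈ range N, c n * |β' n| := by
        rw [← sum_subset hN fun n _ hn => by rw [hβ'0 n hn, abs_zero, mul_zero]]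
        exact sum_congr rfl fun n hn => by rw [hβ' n hn]
    _ ≤ ‖∑ n ∈ range N, β' n • v n‖ := h N β'
    _ = ‖∑ n ∈ s, β n • v n‖ := by
        rw [← sum_subset hN fun n _ hn => by rw [hβ'0 n hn, zero_smul]]
        exact congrArg _ (sum_congr rfl fun n hn => by rw [hβ' n hn])

lemma HasLowerL1Estimate.comp_strictMono (h : HasLowerL1Estimate v c) {φ : ℕ → ℕ}
    (hφ : StrictMono φ) : HasLowerL1Estimate (v ∘ φ) (c ∘ φ) := fun K γ => by
  have := h.sum_le ((range K).map ⟨φ, hφ.injective⟩) (γ ∘ Function.invFun φ)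
  simpa [Function.leftInverse_invFun hφ.injective _] using this

lemma HasLowerL1Estimate.smul (h : HasLowerL1Estimate v c) {b : ℕ → ℝ} (hb : ∀ k, 0 ≤ b k) :
    HasLowerL1Estimate (fun k => b k • v k) (fun k => c k * b k) := fun N β => by
  have := h N fun k => β k * b k
  simpa only [abs_mul, abs_of_nonneg (hb _), smul_smul, mul_assoc, mul_comm (b _)] using this

end LowerEstimate

namespace lp

lemma summable_norm_of_one (t : ℓ¹(ℕ, ℝ)) : Summable fun k => ‖t k‖ := by
  simpa using (lp.memℓp t).summable (by simp)

lemma norm_eq_tsum_norm_of_one (t : ℓ¹(ℕ, ℝ)) : ‖t‖ = ∑' k, ‖t k‖ := by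
  simpa using lp.norm_eq_tsum_rpow (by simp) t

lemma norm_eq_tsum_of_nonneg {t : ℓ¹(ℕ, ℝ)} (ht : ∀ k, 0 ≤ t k) : ‖t‖ = ∑' k, t k := by
  simp only [norm_eq_tsum_norm_of_one, Real.norm_eq_abs, abs_of_nonneg (ht _)]

noncomputable def shiftRight (t : ℓ¹(ℕ, ℝ)) : ℓ¹(ℕ, ℝ) :=
  ⟨fun k => Nat.casesOn k 0 t,
    memℓp_gen <| (summable_nat_add_iff 1).mp (by simpa using summable_norm_of_one t)⟩

@[simp] lemma shiftRight_apply_zero (t : ℓ¹(ℕ, ℝ)) : shiftRight t 0 = 0 := rfl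

@[simp] lemma shiftRight_apply_succ (t : ℓ¹(ℕ, ℝ)) (k : ℕ) : shiftRight t (k + 1) = t k := rfl

lemma shiftRight_sub (s t : ℓ¹(ℕ, ℝ)) : shiftRight (s - t) = shiftRight s - shiftRight t := by
  ext k
  cases k <;> simp

lemma norm_shiftRight (t : ℓ¹(ℕ, ℝ)) : ‖shiftRight t‖ = ‖t‖ := by
  rw [norm_eq_tsum_norm_of_one, norm_eq_tsum_norm_of_one,
    tsum_eq_zero_add' (f := fun k => ‖shiftRight t k‖) (summable_norm_of_one t)]
  simp

def simplex : Set ℓ¹(ℕ, ℝ) := {t | (∀ k, 0 ≤ t k) ∧ ‖t‖ = 1}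

lemma isClosed_simplex : IsClosed simplex := by
  have hnonneg : IsClosed {t : ℓ¹(ℕ, ℝ) | ∀ k, 0 ≤ t k} := by
    simp only [Set.ofPred_forall]
    exact isClosed_iInter fun k => isClosed_le continuous_const
      (lp.lipschitzWith_one_eval 1 k).continuous
  exact hnonneg.inter (isClosed_eq continuous_norm continuous_const)

lemma simplex_subset_sphere : simplex ⊆ Metric.sphere 0 1 := fun t ht => by simpa using ht.2

lemma convex_simplex : Convex ℝ simplex := by
  rintro s ⟨hs0, hs1⟩ r ⟨hr0, hr1⟩ a b ha hb hab
  have hnonneg : ∀ k, 0 ≤ (a • s + b • r) k := fun k => by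
    simp only [lp.coeFn_add, lp.coeFn_smul, Pi.add_apply, Pi.smul_apply, smul_eq_mul]
    exact add_nonneg (mul_nonneg ha (hs0 k)) (mul_nonneg hb (hr0 k))
  refine ⟨hnonneg, ?_⟩
  rw [norm_eq_tsum_of_nonneg hnonneg]
  rw [norm_eq_tsum_of_nonneg hs0] at hs1
  rw [norm_eq_tsum_of_nonneg hr0] at hr1
  simp only [lp.coeFn_add, lp.coeFn_smul, Pi.add_apply, Pi.smul_apply, smul_eq_mul]
  rw [Summable.tsum_add, tsum_mul_left, tsum_mul_left, hs1, hr1, mul_one, mul_one, hab]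
  exacts [(lp.memℓp s).summable_of_one.mul_left a, (lp.memℓp r).summable_of_one.mul_left b]

lemma single_zero_mem_simplex : lp.single 1 0 (1 : ℝ) ∈ simplex := by
  refine ⟨fun k => ?_, by simp [lp.norm_single]⟩
  rw [lp.single_apply, Pi.single_apply]
  split_ifs <;> norm_num

lemma shiftRight_mem_simplex {t : ℓ¹(ℕ, ℝ)} (ht : t ∈ simplex) : shiftRight t ∈ simplex :=
  ⟨fun k => by cases k; exacts [le_rfl, ht.1 _], (norm_shiftRight t).trans ht.2⟩

lemma shiftRight_ne_self {t : ℓ¹(ℕ, ℝ)} (ht : t ∈ simplex) : shiftRight t ≠ t := by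
  intro h
  have hzero : ∀ k, t k = 0 := by
    intro k
    induction k with
    | zero => rw [← h, shiftRight_apply_zero]
    | succ k ih => rw [← h, shiftRight_apply_succ, ih]
  have hnorm : ‖t‖ = 0 := by simp [norm_eq_tsum_norm_of_one, hzero]
  exact one_ne_zero (ht.2.symm.trans hnorm)

section LinearCombination

variable {X : Type*} [NormedAddCommGroup X] [NormedSpace ℝ X] (v : ℕ → X) {M : ℝ}

lemma norm_smul_le_of_norm_le (hv : ∀ k, ‖v k‖ ≤ M) (t : ℓ¹(ℕ, ℝ)) (k : ℕ) :
    ‖t k • v k‖ ≤ M * ‖t k‖ := by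
  rw [norm_smul, mul_comm]
  exact mul_le_mul_of_nonneg_right (hv k) (norm_nonneg _)

lemma summable_norm_smul_of_norm_le (hv : ∀ k, ‖v k‖ ≤ M) (t : ℓ¹(ℕ, ℝ)) :
    Summable fun k => ‖t k • v k‖ :=
  .of_nonneg_of_le (fun _ => norm_nonneg _) (norm_smul_le_of_norm_le v hv t)
    ((summable_norm_of_one t).mul_left M)

lemma summable_mul_norm_of_hasLowerL1Estimate (hv : ∀ k, ‖v k‖ ≤ M) {c : ℕ → ℝ}
    (hlow : HasLowerL1Estimate v c) (hc : ∀ k, 0 ≤ c k) (t : ℓ¹(ℕ, ℝ)) :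
    Summable fun k => c k * ‖t k‖ :=
  summable_of_sum_range_le (fun k => mul_nonneg (hc k) (norm_nonneg _)) fun N => calc
    ∑ k ∈ range N, c k * ‖t k‖ ≤ ‖∑ k ∈ range N, t k • v k‖ := by
      simpa only [Real.norm_eq_abs] using hlow N t
    _ ≤ ∑ k ∈ range N, ‖t k • v k‖ := norm_sum_le _ _
    _ ≤ ∑' k, ‖t k • v k‖ :=
      (summable_norm_smul_of_norm_le v hv t).sum_le_tsum _ fun _ _ => norm_nonneg _

variable [CompleteSpace X]

lemma summable_smul_of_norm_le (hv : ∀ k, ‖v k‖ ≤ M) (t : ℓ¹(ℕ, ℝ)) :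
    Summable fun k => t k • v k :=
  .of_norm (summable_norm_smul_of_norm_le v hv t)

noncomputable def linearCombination (hv : ∀ k, ‖v k‖ ≤ M) : ℓ¹(ℕ, ℝ) →L[ℝ] X :=
  LinearMap.mkContinuous
    { toFun := fun t => ∑' k, t k • v k
      map_add' := fun s t => by
        simp only [lp.coeFn_add, Pi.add_apply, add_smul]
        exact (summable_smul_of_norm_le v hv s).tsum_add (summable_smul_of_norm_le v hv t)
      map_smul' := fun a t => by
        simp only [lp.coeFn_smul, Pi.smul_apply, smul_eq_mul, mul_smul, RingHom.id_apply]
        exact (summable_smul_of_norm_le v hv t).tsum_const_smul a }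
    M fun t => tsum_of_norm_bounded
      (by rw [norm_eq_tsum_norm_of_one]; exact (summable_norm_of_one t).hasSum.mul_left M)
      (norm_smul_le_of_norm_le v hv t)

variable (hv : ∀ k, ‖v k‖ ≤ M)

lemma linearCombination_apply (t : ℓ¹(ℕ, ℝ)) : linearCombination v hv t = ∑' k, t k • v k := rfl

lemma linearCombination_shiftRight (t : ℓ¹(ℕ, ℝ)) :
    linearCombination v hv (shiftRight t) = ∑' k, t k • v (k + 1) := by
  rw [linearCombination_apply, (summable_smul_of_norm_le v hv (shiftRight t)).tsum_eq_zero_add]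
  simp

variable {c : ℕ → ℝ}

lemma tsum_mul_norm_le_norm_linearCombination (hlow : HasLowerL1Estimate v c)
    (hc : ∀ k, 0 ≤ c k) (t : ℓ¹(ℕ, ℝ)) : ∑' k, c k * ‖t k‖ ≤ ‖linearCombination v hv t‖ :=
  le_of_tendsto_of_tendsto'
    (summable_mul_norm_of_hasLowerL1Estimate v hv hlow hc t).hasSum.tendsto_sum_nat
    (summable_smul_of_norm_le v hv t).hasSum.tendsto_sum_nat.norm
    fun N => by simpa only [Real.norm_eq_abs] using hlow N t

lemma antilipschitz_linearCombination (hlow : HasLowerL1Estimate v c) (hc : ∀ k, 1 ≤ c k) :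
    AntilipschitzWith 1 (linearCombination v hv) :=
  (linearCombination v hv).antilipschitz_of_bound fun t => by
    have hc0 : ∀ k, 0 ≤ c k := fun k => zero_le_one.trans (hc k)
    rw [NNReal.coe_one, one_mul, norm_eq_tsum_norm_of_one]
    refine le_trans ?_ (tsum_mul_norm_le_norm_linearCombination v hv hlow hc0 t)
    exact (summable_norm_of_one t).tsum_le_tsum
      (fun k => le_mul_of_one_le_left (norm_nonneg _) (hc k))
      (summable_mul_norm_of_hasLowerL1Estimate v hv hlow hc0 t)

lemma norm_linearCombination_shiftRight_lt (hlow : HasLowerL1Estimate v c)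
    (hshift : ∀ k, ‖v (k + 1)‖ < c k) {t : ℓ¹(ℕ, ℝ)} (ht : t ≠ 0) :
    ‖linearCombination v hv (shiftRight t)‖ < ‖linearCombination v hv t‖ := by
  have hc : ∀ k, 0 ≤ c k := fun k => (norm_nonneg _).trans (hshift k).le
  obtain ⟨k₀, hk₀⟩ : ∃ k, t k ≠ 0 := by
    by_contra! h
    exact ht (lp.ext (funext h))
  have hle : ∀ k, ‖t k‖ * ‖v (k + 1)‖ ≤ c k * ‖t k‖ := fun k => by
    rw [mul_comm]; exact mul_le_mul_of_nonneg_right (hshift k).le (norm_nonneg _)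
  have hsum := summable_mul_norm_of_hasLowerL1Estimate v hv hlow hc t
  calc ‖linearCombination v hv (shiftRight t)‖ ≤ ∑' k, ‖t k‖ * ‖v (k + 1)‖ := by
        rw [linearCombination_shiftRight]
        exact tsum_of_norm_bounded (Summable.of_nonneg_of_le
          (fun k => mul_nonneg (norm_nonneg _) (norm_nonneg _)) hle hsum).hasSum
          fun k => (norm_smul _ _).le
    _ < ∑' k, c k * ‖t k‖ := Summable.tsum_lt_tsum_of_nonneg
        (fun k => mul_nonneg (norm_nonneg _) (norm_nonneg _)) hle
        (by rw [mul_comm]; exact mul_lt_mul_of_pos_right (hshift k₀) (norm_pos_iff.2 hk₀)) hsum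
    _ ≤ ‖linearCombination v hv t‖ := tsum_mul_norm_le_norm_linearCombination v hv hlow hc t

end LinearCombination

end lp

theorem failsFPP_of_hasLowerL1Estimate {X : Type*} [NormedAddCommGroup X] [NormedSpace ℝ X]
    [CompleteSpace X] {v : ℕ → X} {c : ℕ → ℝ} {M : ℝ} (hv : ∀ k, ‖v k‖ ≤ M)
    (hlow : HasLowerL1Estimate v c) (hc : ∀ k, 1 ≤ c k) (hshift : ∀ k, ‖v (k + 1)‖ < c k) :
    FailsFPP X :=
  failsFPP_of_antilipschitz (lp.linearCombination v hv)
    (lp.antilipschitz_linearCombination v hv hlow hc) ⟨_, lp.single_zero_mem_simplex⟩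
    lp.isClosed_simplex (Metric.isBounded_sphere.subset lp.simplex_subset_sphere)
    lp.convex_simplex lp.shiftRight (fun _ => lp.shiftRight_mem_simplex)
    (fun s _ r _ hsr => by
      simpa only [← map_sub, ← lp.shiftRight_sub] using
        lp.norm_linearCombination_shiftRight_lt v hv hlow hshift (sub_ne_zero.2 hsr))
    fun _ => lp.shiftRight_ne_self

lemma one_add_half_lt_one_sub_mul_one_add {ε δ : ℝ} (hε : 0 < ε) (hε₁ : ε ≤ 1)
    (hδε : δ ≤ ε / 8) : 1 + ε / 2 < (1 - δ) * (1 + ε) := by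
  nlinarith

theorem failsFPP_of_hasLowerL1Estimate_one_sub {X : Type*} [NormedAddCommGroup X]
    [NormedSpace ℝ X] [CompleteSpace X] {x : ℕ → X} {δ : ℕ → ℝ} (hx : ∀ n, ‖x n‖ ≤ 1)
    (hlow : HasLowerL1Estimate x fun n => 1 - δ n) (hδ₀ : Tendsto δ atTop (𝓝 0)) :
    FailsFPP X := by
  obtain ⟨φ, hφ, hδφ⟩ := extraction_forall_of_eventually fun k =>
    hδ₀.eventually (eventually_le_nhds (show (0 : ℝ) < 2⁻¹ ^ k / 8 by positivity))
  have hε : ∀ k, (0 : ℝ) < 2⁻¹ ^ k := fun k => by positivity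
  have hε₁ : ∀ k, (2⁻¹ : ℝ) ^ k ≤ 1 := fun k => pow_le_one₀ (by norm_num) (by norm_num)
  have hweight := fun k => one_add_half_lt_one_sub_mul_one_add (hε k) (hε₁ k) (hδφ k)
  have hnorm : ∀ k, ‖(1 + (2⁻¹ : ℝ) ^ k) • x (φ k)‖ ≤ 1 + 2⁻¹ ^ k := fun k => by
    rw [norm_smul, Real.norm_of_nonneg (by linarith [hε k])]
    exact mul_le_of_le_one_right (by linarith [hε k]) (hx _)
  refine failsFPP_of_hasLowerL1Estimate (M := 2)
    (fun k => (hnorm k).trans (by linarith [hε₁ k]))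
    ((hlow.comp_strictMono hφ).smul fun k => by linarith [hε k]) (fun k => ?_) (fun k => ?_)
  · dsimp only [Function.comp]
    linarith [hweight k, hε k]
  · refine (hnorm (k + 1)).trans_lt ?_
    dsimp only [Function.comp]
    rw [pow_succ]
    linarith [hweight k]

theorem stmt9 {X : Type*} [NormedAddCommGroup X] [NormedSpace ℝ X] [CompleteSpace X] (x : ℕ → X) (h : SpansL1Asymptotically x) :
    FailsFPP X := by
  obtain ⟨δ, -, hδ₀, hest⟩ := h
  have hx : ∀ n, ‖x n‖ ≤ 1 := fun n => by
    simpa [apply_ite abs, ite_smul] using (hest (n + 1) fun m => if m = n then 1 else 0).2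
  exact failsFPP_of_hasLowerL1Estimate_one_sub hx (fun N α => (hest N α).1) hδ₀
end

section
/- If X is a Banach space that is not reflexive and X is M-embedded, then X''' decomposes as the ℓ¹-direct sum X' ⊕₁ X^⊥, i.e., ‖φ‖ = ‖φ|restricted-part ∈ X'‖ + ‖φ − that part‖ for the corresponding L-projection, and consequently X'''' = X^{⊥⊥} ⊕_∞ X'^⊥, and X'^⊥ contains a norm-one element. -/
open NormedSpace Filter Topology

/-!
Let `π` be the L-projection of `X'''` onto `X^⊥`. For `g ∈ X'` the functional `j g ∈ X'''`
restricts to `g` on `X`, so `‖j g‖ = ‖g‖ ≤ ‖j g - π (j g)‖`, and the L-norm identity forces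
`π (j g) = 0`. Hence `id - π` is the canonical projection `φ ↦ j (φ|_X)` onto `X'`, which is
the decomposition `X''' = X' ⊕₁ X^⊥`. The transpose of an L-projection is an M-projection,
which gives `X'''' = X^⊥⊥ ⊕_∞ X'^⊥`. Finally, nonreflexivity makes `X^⊥ ≠ 0` by Hahn–Banach,
so `X'` is a proper closed subspace of `X'''`, and Hahn–Banach once more gives a norm-one
element of `X'^⊥`.
-/

namespace ContinuousLinearMap

variable {E F : Type*} [SeminormedAddCommGroup E] [NormedSpace ℝ E]
  [SeminormedAddCommGroup F] [NormedSpace ℝ F]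

noncomputable def dualMap (T : E →L[ℝ] F) : Dual ℝ F →L[ℝ] Dual ℝ E := precomp ℝ T

@[simp]
theorem dualMap_apply (T : E →L[ℝ] F) (ψ : Dual ℝ F) : T.dualMap ψ = ψ.comp T := rfl

theorem id_sub_dualMap (P : E →L[ℝ] E) :
    ContinuousLinearMap.id ℝ (Dual ℝ E) - P.dualMap =
      (ContinuousLinearMap.id ℝ E - P).dualMap := by
  ext ψ x
  simp

section Projection

variable {P : E →L[ℝ] E}

theorem id_sub_apply_idem (hidem : ∀ x, P (P x) = P x) (x : E) :
    (ContinuousLinearMap.id ℝ E - P) ((ContinuousLinearMap.id ℝ E - P) x) =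
      (ContinuousLinearMap.id ℝ E - P) x := by
  simp [hidem]

theorem norm_eq_add_id_sub (hnorm : ∀ x, ‖x‖ = ‖P x‖ + ‖x - P x‖) (x : E) :
    ‖x‖ = ‖(ContinuousLinearMap.id ℝ E - P) x‖ + ‖x - (ContinuousLinearMap.id ℝ E - P) x‖ := by
  rw [sub_apply, id_apply, sub_sub_cancel, hnorm x, add_comm]

theorem opNorm_le_one_of_norm_eq_add (hnorm : ∀ x, ‖x‖ = ‖P x‖ + ‖x - P x‖) :
    ‖P‖ ≤ 1 :=
  P.opNorm_le_bound zero_le_one fun x => by linarith [hnorm x, norm_nonneg (x - P x)]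

theorem dualMap_apply_idem (hidem : ∀ x, P (P x) = P x) (ψ : Dual ℝ E) :
    P.dualMap (P.dualMap ψ) = P.dualMap ψ :=
  ext fun x => by simp [hidem]

theorem norm_eq_max_dualMap (hidem : ∀ x, P (P x) = P x)
    (hnorm : ∀ x, ‖x‖ = ‖P x‖ + ‖x - P x‖) (ψ : Dual ℝ E) :
    ‖ψ‖ = max ‖P.dualMap ψ‖ ‖ψ - P.dualMap ψ‖ := by
  refine le_antisymm ?_ ?_
  · set m := max ‖P.dualMap ψ‖ ‖ψ - P.dualMap ψ‖
    refine ψ.opNorm_le_bound (le_max_of_le_left (norm_nonneg _)) fun x => ?_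
    have hsplit : ψ x = P.dualMap ψ (P x) + (ψ - P.dualMap ψ) (x - P x) := by
      simp [hidem]
    calc ‖ψ x‖ ≤ ‖P.dualMap ψ‖ * ‖P x‖ + ‖ψ - P.dualMap ψ‖ * ‖x - P x‖ :=
          hsplit ▸ norm_add_le_of_le (le_opNorm _ _) (le_opNorm _ _)
      _ ≤ m * ‖P x‖ + m * ‖x - P x‖ := by
          gcongr
          exacts [le_max_left _ _, le_max_right _ _]
      _ = m * ‖x‖ := by rw [hnorm x]; ring
  · have hcomp : ∀ R : E →L[ℝ] E, ‖R‖ ≤ 1 → ‖ψ.comp R‖ ≤ ‖ψ‖ := fun R hR =>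
      (opNorm_comp_le _ _).trans (mul_le_of_le_one_right (norm_nonneg _) hR)
    refine max_le (hcomp P (opNorm_le_one_of_norm_eq_add hnorm)) ?_
    have : ψ - P.dualMap ψ = ψ.comp (ContinuousLinearMap.id ℝ E - P) := by ext x; simp
    exact this ▸ hcomp _ (opNorm_le_one_of_norm_eq_add (norm_eq_add_id_sub hnorm))

theorem range_dualMap_of_idem (hidem : ∀ x, P (P x) = P x) :
    Set.range P.dualMap =
      {ψ : Dual ℝ E | ∀ x ∈ Set.range (ContinuousLinearMap.id ℝ E - P), ψ x = 0} := by
  ext ψ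
  constructor
  · rintro ⟨ψ, rfl⟩ _ ⟨x, rfl⟩
    simp [hidem]
  · intro hψ
    refine ⟨ψ, ext fun x => ?_⟩
    have h := hψ (x - P x) ⟨x, rfl⟩
    rw [map_sub, sub_eq_zero] at h
    exact h.symm

end Projection

theorem exists_norm_eq_one_forall_apply_eq_zero (T : F →L[ℝ] E)
    (hT : IsClosed (Set.range T)) (hT' : ¬ Function.Surjective T) :
    ∃ f : Dual ℝ E, (∀ y, f (T y) = 0) ∧ ‖f‖ = 1 := by
  obtain ⟨ξ, hξ⟩ := not_forall.1 hT'
  let p := LinearMap.range (T : F →ₗ[ℝ] E)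
  have : IsClosed (p : Set E) := by rwa [LinearMap.coe_range]
  have hξp : p.mkQ ξ ≠ 0 := by simpa [p, Submodule.Quotient.mk_eq_zero] using hξ
  obtain ⟨g, hg⟩ := SeparatingDual.exists_ne_zero (R := ℝ) hξp
  let f : Dual ℝ E := g.comp p.mkQL
  have hf : ‖f‖ ≠ 0 := fun h => hg (by simpa [f, h] using f.le_opNorm ξ)
  refine ⟨‖f‖⁻¹ • f, fun y => ?_, ?_⟩
  · have hy : p.mkQ (T y) = 0 := (Submodule.Quotient.mk_eq_zero p).2 ⟨y, rfl⟩
    rw [smul_apply, comp_apply, Submodule.mkQL_apply, hy, map_zero, smul_zero]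
  · rw [norm_smul, norm_inv, norm_norm, inv_mul_cancel₀ hf]

end ContinuousLinearMap

section DoubleDual

open ContinuousLinearMap

variable {X : Type*} [NormedAddCommGroup X] [NormedSpace ℝ X]

local notation "ι" => inclusionInDoubleDual ℝ X
local notation "j" => inclusionInDoubleDual ℝ (Dual ℝ X)

theorem isClosed_range_inclusionInDoubleDual [CompleteSpace X] : IsClosed (Set.range ι) :=
  have hι : Isometry ι := (inclusionInDoubleDualLi ℝ).isometry
  hι.isClosedEmbedding.isClosed_range

theorem inclusionInDoubleDual_comp_inclusionInDoubleDual (g : Dual ℝ X) : (j g).comp ι = g :=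
  rfl

theorem norm_comp_inclusionInDoubleDual_le (φ : Dual ℝ (Dual ℝ (Dual ℝ X))) :
    ‖φ.comp ι‖ ≤ ‖φ‖ :=
  opNorm_le_bound _ (norm_nonneg φ) fun x =>
    (φ.le_opNorm (ι x)).trans
      (mul_le_mul_of_nonneg_left (double_dual_bound ℝ X x) (norm_nonneg φ))

variable {π : Dual ℝ (Dual ℝ (Dual ℝ X)) →L[ℝ] Dual ℝ (Dual ℝ (Dual ℝ X))}

/-- `j g` and its restriction `g` to `X` have the same norm, so the `X^⊥`-component of `j g`
must vanish. -/
theorem apply_inclusionInDoubleDual_eq_zero (hnorm : ∀ φ, ‖φ‖ = ‖π φ‖ + ‖φ - π φ‖)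
    (hrange : Set.range π ⊆ {φ | ∀ x : X, φ (ι x) = 0}) (g : Dual ℝ X) :
    π (j g) = 0 := by
  have hvanish : (π (j g)).comp ι = 0 := ext fun x => hrange ⟨j g, rfl⟩ x
  have hle : ‖j g‖ ≤ ‖j g - π (j g)‖ :=
    calc ‖j g‖ = ‖g‖ := (inclusionInDoubleDualLi ℝ).norm_map g
      _ = ‖(j g - π (j g)).comp ι‖ := by
        rw [sub_comp, hvanish, sub_zero, inclusionInDoubleDual_comp_inclusionInDoubleDual]
      _ ≤ ‖j g - π (j g)‖ := norm_comp_inclusionInDoubleDual_le _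
  have hzero : ‖π (j g)‖ = 0 := by linarith [hnorm (j g), norm_nonneg (π (j g))]
  exact ext fun ξ => norm_le_zero_iff.1 (by simpa [hzero] using (π (j g)).le_opNorm ξ)

theorem sub_apply_eq_inclusionInDoubleDual_comp (hidem : ∀ φ, π (π φ) = π φ)
    (hnorm : ∀ φ, ‖φ‖ = ‖π φ‖ + ‖φ - π φ‖)
    (hrange : Set.range π = {φ | ∀ x : X, φ (ι x) = 0})
    (φ : Dual ℝ (Dual ℝ (Dual ℝ X))) :
    φ - π φ = j (φ.comp ι) := by
  obtain ⟨χ, hχ⟩ : φ - j (φ.comp ι) ∈ Set.range π := by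
    rw [hrange]
    exact fun x => sub_self (φ (ι x))
  have h := hidem χ
  rw [hχ, map_sub, apply_inclusionInDoubleDual_eq_zero hnorm hrange.subset, sub_zero] at h
  rw [h, sub_sub_cancel]

theorem range_id_sub_eq_range_inclusionInDoubleDual (hidem : ∀ φ, π (π φ) = π φ)
    (hnorm : ∀ φ, ‖φ‖ = ‖π φ‖ + ‖φ - π φ‖)
    (hrange : Set.range π = {φ | ∀ x : X, φ (ι x) = 0}) :
    Set.range (ContinuousLinearMap.id ℝ (Dual ℝ (Dual ℝ (Dual ℝ X))) - π) =
      Set.range j := by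
  ext φ
  constructor
  · rintro ⟨φ, rfl⟩
    exact ⟨φ.comp ι, (sub_apply_eq_inclusionInDoubleDual_comp hidem hnorm hrange φ).symm⟩
  · rintro ⟨g, rfl⟩
    exact ⟨j g, by simp [apply_inclusionInDoubleDual_eq_zero hnorm hrange.subset]⟩

theorem not_surjective_inclusionInDoubleDual_dual [CompleteSpace X]
    (hidem : ∀ φ, π (π φ) = π φ)
    (hnorm : ∀ φ, ‖φ‖ = ‖π φ‖ + ‖φ - π φ‖)
    (hrange : Set.range π = {φ | ∀ x : X, φ (ι x) = 0}) (hnr : ¬ Function.Surjective ι) :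
    ¬ Function.Surjective j := by
  intro hj
  obtain ⟨φ, hφX, hφ⟩ := exists_norm_eq_one_forall_apply_eq_zero (E := Dual ℝ (Dual ℝ X)) ι
    isClosed_range_inclusionInDoubleDual hnr
  obtain ⟨g, rfl⟩ := hj φ
  obtain ⟨χ, hχ⟩ : j g ∈ Set.range π := hrange ▸ hφX
  have h := hidem χ
  rw [hχ, apply_inclusionInDoubleDual_eq_zero hnorm hrange.subset] at h
  simp [← h] at hφ

end DoubleDual

theorem stmt17 {X : Type*} [NormedAddCommGroup X] [NormedSpace ℝ X] [CompleteSpace X] (hX : IsMEmbedded X)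
    (hnr : ¬ Function.Surjective (inclusionInDoubleDual ℝ X)) :
    (∃ P : Dual ℝ (Dual ℝ (Dual ℝ X)) →L[ℝ] Dual ℝ (Dual ℝ (Dual ℝ X)),
      (∀ φ, P (P φ) = P φ) ∧ (∀ φ, ‖φ‖ = ‖P φ‖ + ‖φ - P φ‖) ∧
      Set.range P = Set.range (inclusionInDoubleDual ℝ (Dual ℝ X)) ∧
      Set.range (ContinuousLinearMap.id ℝ (Dual ℝ (Dual ℝ (Dual ℝ X))) - P) =
        {φ : Dual ℝ (Dual ℝ (Dual ℝ X)) | ∀ x : X, φ (inclusionInDoubleDual ℝ X x) = 0}) ∧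
    (∃ Q : Dual ℝ (Dual ℝ (Dual ℝ (Dual ℝ X))) →L[ℝ] Dual ℝ (Dual ℝ (Dual ℝ (Dual ℝ X))),
      (∀ ψ, Q (Q ψ) = Q ψ) ∧ (∀ ψ, ‖ψ‖ = max ‖Q ψ‖ ‖ψ - Q ψ‖) ∧
      Set.range Q =
        {ψ : Dual ℝ (Dual ℝ (Dual ℝ (Dual ℝ X))) |
          ∀ φ : Dual ℝ (Dual ℝ (Dual ℝ X)),
            (∀ x : X, φ (inclusionInDoubleDual ℝ X x) = 0) → ψ φ = 0} ∧
      Set.range (ContinuousLinearMap.id ℝ (Dual ℝ (Dual ℝ (Dual ℝ (Dual ℝ X)))) - Q) =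
        {ψ : Dual ℝ (Dual ℝ (Dual ℝ (Dual ℝ X))) |
          ∀ f : Dual ℝ X, ψ (inclusionInDoubleDual ℝ (Dual ℝ X) f) = 0}) ∧
    ∃ ψ : Dual ℝ (Dual ℝ (Dual ℝ (Dual ℝ X))),
      (∀ f : Dual ℝ X, ψ (inclusionInDoubleDual ℝ (Dual ℝ X) f) = 0) ∧ ‖ψ‖ = 1 := by
  obtain ⟨π, hidem, hnorm, hrange⟩ := hX
  set P := ContinuousLinearMap.id ℝ (Dual ℝ (Dual ℝ (Dual ℝ X))) - π
  have hPidem := ContinuousLinearMap.id_sub_apply_idem hidem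
  have hPnorm := ContinuousLinearMap.norm_eq_add_id_sub hnorm
  have hPrange : Set.range P = Set.range (inclusionInDoubleDual ℝ (Dual ℝ X)) :=
    range_id_sub_eq_range_inclusionInDoubleDual hidem hnorm hrange
  have hPcompl : Set.range (ContinuousLinearMap.id ℝ (Dual ℝ (Dual ℝ (Dual ℝ X))) - P) =
      {φ : Dual ℝ (Dual ℝ (Dual ℝ X)) | ∀ x : X, φ (inclusionInDoubleDual ℝ X x) = 0} := by
    rw [sub_sub_cancel, hrange]
  refine ⟨⟨P, hPidem, hPnorm, hPrange, hPcompl⟩, ⟨P.dualMap,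
    ContinuousLinearMap.dualMap_apply_idem hPidem,
    ContinuousLinearMap.norm_eq_max_dualMap hPidem hPnorm, ?_, ?_⟩, ?_⟩
  · rw [ContinuousLinearMap.range_dualMap_of_idem hPidem, hPcompl]
    rfl
  · rw [ContinuousLinearMap.id_sub_dualMap,
      ContinuousLinearMap.range_dualMap_of_idem (ContinuousLinearMap.id_sub_apply_idem hPidem),
      sub_sub_cancel, hPrange]
    simp only [Set.forall_mem_range]
  · exact ContinuousLinearMap.exists_norm_eq_one_forall_apply_eq_zero
      (E := Dual ℝ (Dual ℝ (Dual ℝ X))) _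
      isClosed_range_inclusionInDoubleDual
      (not_surjective_inclusionInDoubleDual_dual hidem hnorm hrange hnr)
end
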